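/- Let F be a field of characteristic ≠ 2, L/F a quadratic field extension with nontrivial F-automorphism ι, and (V,ψ) a finite-dimensional quadratic space over L. Let s denote the ι-semilinear automorphism of C(ψ ⊥ ^ιψ) of order 2 extending the switch (v,w) ↦ (w,v). The F-subspace of s-fixed vectors of V ⊕ ^ιV is {(v,v) : v ∈ V}, and the restriction of ψ ⊥ ^ιψ to it, namely v ↦ Tr_{L/F}(ψ(v)), is the transfer tr_*(ψ). The natural embedding of this fixed quadratic space into C(ψ ⊥ ^ιψ) induces an isomorphism of F-algebras from C(tr_*(ψ)) onto the F-subalgebra (C(ψ ⊥ ^ιψ))^s of s-fixed elements, which preserves the even/odd grading and intertwines the canonical involutions. -/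

import Mathlib

/-!
Choose `μ ∈ L` with `ι μ = -μ`. Then `1, μ` span `L` over `F` and `Tr(c) = c + ι c`, so
`c ⊗ v ↦ (c v, ι(c) v)` is an isometry from the base change `(tr⋆ψ)_L` onto `ψ ⊥ ^ιψ`. Hence
`C(ψ ⊥ ^ιψ) ≅ L ⊗_F C(tr⋆ψ)`, in which `C(tr⋆ψ)` sits injectively as `1 ⊗ C(tr⋆ψ)`, and every
element is `a + μ b` with `a, b` in that copy. The copy is generated by diagonal vectors, which
`S` fixes, so `S (a + μ b) = a - μ b`: the `S`-fixed elements are those with `b = 0`. The grading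
and the reversion are preserved because the embedding sends generators to generators.
-/

section Conj
variable {F L : Type} [Field F] [Field L] [Algebra F L]

/-- The conjugate of an `L`-module along a ring automorphism `ιL` of `L`: the same additive
group with the scalar action twisted by `ιL`. -/
def Conj (ιL : L ≃ₐ[F] L) (V : Type) : Type := V

instance Conj.addCommGroup (ιL : L ≃ₐ[F] L) (V : Type) [AddCommGroup V] :
    AddCommGroup (Conj ιL V) := inferInstanceAs (AddCommGroup V)

instance Conj.module (ιL : L ≃ₐ[F] L) (V : Type) [AddCommGroup V] [Module L V] :
    Module L (Conj ιL V) := Module.compHom V (ιL.toRingEquiv.toRingHom)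

/-- The identity map, viewed as a map into the conjugate module. -/
def toConj (ιL : L ≃ₐ[F] L) (V : Type) : V → Conj ιL V := fun v => v

/-- The identity map, viewed as a map out of the conjugate module. -/
def ofConj (ιL : L ≃ₐ[F] L) (V : Type) : Conj ιL V → V := fun v => v

lemma Conj.smul_def (ιL : L ≃ₐ[F] L) (V : Type) [AddCommGroup V] [Module L V]
    (c : L) (v : Conj ιL V) : c • v = toConj ιL V (ιL c • ofConj ιL V v) := rfl

variable (ιL : L ≃ₐ[F] L) (V : Type) [AddCommGroup V] [Module L V]

/-- The conjugate quadratic form `^ιψ` on the conjugate module. -/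
noncomputable def conjForm (hι : Function.Involutive ιL) (ψ : QuadraticForm L V) :
    QuadraticForm L (Conj ιL V) where
  toFun v := ιL (ψ (ofConj ιL V v))
  toFun_smul a v := by
    try dsimp only
    rw [Conj.smul_def]
    show ιL (ψ (ιL a • ofConj ιL V v)) = (a * a) • ιL (ψ (ofConj ιL V v))
    rw [QuadraticMap.map_smul, smul_eq_mul, map_mul, map_mul, hι a, smul_eq_mul]
  exists_companion' := by
    obtain ⟨B, hB⟩ := ψ.exists_companion
    refine ⟨LinearMap.mk₂ L
      (fun x y => ιL (B (ofConj ιL V x) (ofConj ιL V y))) ?_ ?_ ?_ ?_, ?_⟩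
    · intro x x' y
      show ιL (B (ofConj ιL V x + ofConj ιL V x') (ofConj ιL V y)) = _
      rw [map_add, LinearMap.add_apply, map_add]
    · intro a x y
      show ιL (B (ιL a • ofConj ιL V x) (ofConj ιL V y)) = a * ιL (B (ofConj ιL V x) (ofConj ιL V y))
      rw [map_smul, LinearMap.smul_apply, smul_eq_mul, map_mul, hι a]
    · intro x y y'
      show ιL (B (ofConj ιL V x) (ofConj ιL V y + ofConj ιL V y')) = _
      rw [map_add, map_add]
    · intro a x y
      show ιL (B (ofConj ιL V x) (ιL a • ofConj ιL V y)) = a * ιL (B (ofConj ιL V x) (ofConj ιL V y))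
      rw [map_smul, smul_eq_mul, map_mul, hι a]
    · intro x y
      show ιL (ψ (ofConj ιL V x + ofConj ιL V y)) = _
      rw [hB, map_add, map_add]
      rfl
end Conj
section transfer
variable (F L : Type) [Field F] [Field L] [Algebra F L]
variable (V : Type) [AddCommGroup V] [Module L V] [Module F V] [IsScalarTower F L V]

/-- The transfer (Scharlau transfer along the trace map `Tr_{L/F}`) of a quadratic form. -/
noncomputable def transferForm (ψ : QuadraticForm L V) : QuadraticForm F V where
  toFun v := Algebra.trace F L (ψ v)
  toFun_smul a v := by
    try dsimp only
    rw [← algebraMap_smul L a v, QuadraticMap.map_smul, smul_eq_mul, ← map_mul,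
      ← Algebra.smul_def, map_smul]
  exists_companion' := by
    obtain ⟨B, hB⟩ := ψ.exists_companion
    refine ⟨LinearMap.mk₂ F (fun x y => Algebra.trace F L (B x y)) ?_ ?_ ?_ ?_, ?_⟩
    · intro x x' y; (try dsimp only); rw [map_add, LinearMap.add_apply, map_add]
    · intro a x y; try dsimp only
      rw [← algebraMap_smul L a x, map_smul, LinearMap.smul_apply, algebraMap_smul L a, map_smul]
    · intro x y y'; (try dsimp only); rw [map_add, map_add]
    · intro a x y; try dsimp only
      rw [← algebraMap_smul L a y, map_smul, algebraMap_smul L a, map_smul]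
    · intro x y
      simp only [LinearMap.mk₂_apply, hB, map_add]
end transfer

section QuadraticExtension
variable {F L : Type*} [Field F] [Field L] [Algebra F L] {ι : L ≃ₐ[F] L}

theorem AlgEquiv.exists_apply_eq_neg (hnontriv : ι ≠ AlgEquiv.refl) (hι : Function.Involutive ι) :
    ∃ μ : L, μ ≠ 0 ∧ ι μ = -μ := by
  obtain ⟨c, hc⟩ : ∃ c, ι c ≠ c := by
    by_contra! h
    exact hnontriv (AlgEquiv.ext h)
  exact ⟨c - ι c, sub_ne_zero.mpr hc.symm, by rw [map_sub, hι c, neg_sub]⟩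

theorem algebraMap_trace_eq_add_of_finrank_eq_two (hquad : Module.finrank F L = 2)
    (hnontriv : ι ≠ AlgEquiv.refl) (c : L) :
    algebraMap F L (Algebra.trace F L c) = c + ι c := by
  classical
  have : FiniteDimensional F L := Module.finite_of_finrank_eq_succ hquad
  have hcard : Nat.card (L ≃ₐ[F] L) = 2 := by
    refine le_antisymm ?_ ?_
    · calc Nat.card (L ≃ₐ[F] L) = Nat.card (L →ₐ[F] L) :=
            Nat.card_congr (Algebra.IsAlgebraic.algEquivEquivAlgHom F L).toEquiv
        _ ≤ 2 := hquad ▸ card_algHom_le_finrank F L L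
    · simpa [Finset.card_pair (Ne.symm hnontriv)] using
        Finset.card_le_univ ({AlgEquiv.refl, ι} : Finset (L ≃ₐ[F] L))
  have : IsGalois F L := IsGalois.of_card_aut_eq_finrank F L (hcard.trans hquad.symm)
  have huniv : (Finset.univ : Finset (L ≃ₐ[F] L)) = {AlgEquiv.refl, ι} :=
    (Finset.eq_univ_of_card _ (by
      rw [Finset.card_pair (Ne.symm hnontriv), ← Nat.card_eq_fintype_card, hcard])).symm
  rw [trace_eq_sum_automorphisms, huniv, Finset.sum_pair (Ne.symm hnontriv)]
  rfl

theorem span_one_pair_eq_top (htr : ∀ c, algebraMap F L (Algebra.trace F L c) = c + ι c)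
    (h2 : (2 : F) ≠ 0) {μ : L} (hμ : μ ≠ 0) (hμι : ι μ = -μ) :
    Submodule.span F {1, μ} = ⊤ := by
  refine Submodule.eq_top_iff'.mpr fun c => Submodule.mem_span_pair.mpr
    ⟨2⁻¹ * Algebra.trace F L c, 2⁻¹ * Algebra.trace F L (c / μ), ?_⟩
  have h2L : (2 : L) ≠ 0 := by
    rw [← map_ofNat (algebraMap F L) 2]
    exact (map_ne_zero _).mpr h2
  simp only [Algebra.smul_def, map_mul, map_inv₀, map_ofNat, htr, map_div₀, hμι]
  field_simp
  ring

theorem two_ne_zero_of_invertible (F : Type*) {L : Type*} [Field F] [Field L] [Algebra F L]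
    [Invertible (2 : F)] : (2 : L) ≠ 0 := by
  rw [← map_ofNat (algebraMap F L) 2]
  exact (isUnit_of_invertible (2 : F)).map (algebraMap F L) |>.ne_zero

end QuadraticExtension

open scoped TensorProduct

theorem TensorProduct.exists_eq_one_tmul_add_tmul {F L M : Type*} [Field F] [Field L] [Algebra F L]
    [AddCommGroup M] [Module F M] {μ : L} (hspan : Submodule.span F {1, μ} = ⊤)
    (z : L ⊗[F] M) : ∃ a b : M, z = 1 ⊗ₜ a + μ ⊗ₜ b := by
  induction z using TensorProduct.induction_on with
  | zero => exact ⟨0, 0, by simp⟩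
  | tmul c m =>
    obtain ⟨s, t, rfl⟩ := Submodule.mem_span_pair.mp (hspan ▸ Submodule.mem_top (x := c))
    exact ⟨s • m, t • m, by rw [add_tmul, smul_tmul, smul_tmul]⟩
  | add x y hx hy =>
    obtain ⟨a, b, rfl⟩ := hx
    obtain ⟨a', b', rfl⟩ := hy
    exact ⟨a + a', b + b', by rw [tmul_add, tmul_add]; abel⟩

section Diagonal
variable {F L : Type} [Field F] [Field L] [Algebra F L] (ι : L ≃ₐ[F] L) (V : Type)

theorem switch_eq_self_iff (p : V × Conj ι V) :
    (ofConj ι V p.2, toConj ι V p.1) = p ↔ ∃ v : V, p = (v, toConj ι V v) :=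
  ⟨fun h => ⟨p.1, Prod.ext rfl (congrArg Prod.snd h).symm⟩, by rintro ⟨v, rfl⟩; rfl⟩

variable [AddCommGroup V]

theorem toConj_add (v w : V) : toConj ι V (v + w) = toConj ι V v + toConj ι V w := rfl

theorem smul_toConj [Module L V] (c : L) (v : V) : c • toConj ι V v = toConj ι V (ι c • v) :=
  rfl

variable [Module F V]

instance Conj.instModuleBase : Module F (Conj ι V) := inferInstanceAs (Module F V)

def diagonal : V →ₗ[F] V × Conj ι V where
  toFun v := (v, toConj ι V v)
  map_add' _ _ := rfl
  map_smul' _ _ := rfl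

theorem diagonal_apply (v : V) : diagonal ι V v = (v, toConj ι V v) := rfl

variable [Module L V] [IsScalarTower F L V]

instance Conj.instIsScalarTower : IsScalarTower F L (Conj ι V) where
  smul_assoc a c v := by
    change ι (a • c) • ofConj ι V v = a • ι c • ofConj ι V v
    rw [map_smul, smul_assoc]

variable {ι V}

theorem diagonal_liftBaseChange_one_tmul_add_tmul {μ : L} (hμι : ι μ = -μ) (a b : V) :
    (diagonal ι V).liftBaseChange L (1 ⊗ₜ a + μ ⊗ₜ b) =
      (a + μ • b, toConj ι V (a - μ • b)) := by
  simp only [map_add, LinearMap.liftBaseChange_tmul, one_smul, diagonal_apply, Prod.smul_mk,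
    smul_toConj, hμι, neg_smul, Prod.mk_add_mk, sub_eq_add_neg, toConj_add]

theorem diagonal_liftBaseChange_bijective (h2 : (2 : L) ≠ 0) {μ : L} (hμ : μ ≠ 0)
    (hμι : ι μ = -μ) (hspan : Submodule.span F {1, μ} = ⊤) :
    Function.Bijective ((diagonal ι V).liftBaseChange L) := by
  refine ⟨(injective_iff_map_eq_zero _).mpr fun z hz => ?_, fun p => ?_⟩
  · obtain ⟨a, b, rfl⟩ := TensorProduct.exists_eq_one_tmul_add_tmul hspan z
    rw [diagonal_liftBaseChange_one_tmul_add_tmul hμι, Prod.mk_eq_zero] at hz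
    obtain ⟨hplus, hminus : a - μ • b = 0⟩ := hz
    have ha : (2 : L) • a = 0 :=
      calc (2 : L) • a = (a + μ • b) + (a - μ • b) := by rw [two_smul]; abel
        _ = 0 := by rw [hplus, hminus, add_zero]
    have hb : μ • b = 0 := by
      rwa [(smul_eq_zero.mp ha).resolve_left h2, zero_sub, neg_eq_zero] at hminus
    rw [(smul_eq_zero.mp ha).resolve_left h2, (smul_eq_zero.mp hb).resolve_left hμ,
      TensorProduct.tmul_zero, TensorProduct.tmul_zero, add_zero]
  · obtain ⟨v, u⟩ := p
    refine ⟨1 ⊗ₜ ((2 : L)⁻¹ • (v + ofConj ι V u)) +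
      μ ⊗ₜ (μ⁻¹ • (2 : L)⁻¹ • (v - ofConj ι V u)), ?_⟩
    rw [diagonal_liftBaseChange_one_tmul_add_tmul hμι, smul_inv_smul₀ hμ, ← smul_add, ← smul_sub]
    refine Prod.ext ?_ ?_
    · change (2 : L)⁻¹ • (v + ofConj ι V u + (v - ofConj ι V u)) = v
      rw [add_add_sub_cancel, ← two_smul L, inv_smul_smul₀ h2]
    · change (2 : L)⁻¹ • (v + ofConj ι V u - (v - ofConj ι V u)) = ofConj ι V u
      rw [add_sub_sub_cancel, ← two_smul L, inv_smul_smul₀ h2]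

end Diagonal

section Transfer
variable {F L : Type} [Field F] [Field L] [Algebra F L] {ι : L ≃ₐ[F] L} (hι : Function.Involutive ι)
  {V : Type} [AddCommGroup V] [Module L V] [Module F V] [IsScalarTower F L V]
  (ψ : QuadraticForm L V)

theorem prod_conjForm_diagonal (htr : ∀ c, algebraMap F L (Algebra.trace F L c) = c + ι c)
    (v : V) :
    ψ.prod (conjForm ι V hι ψ) (diagonal ι V v) = algebraMap F L (transferForm F L V ψ v) :=
  (htr (ψ v)).symm

variable [Invertible (2 : F)]

theorem prod_conjForm_comp_diagonal_liftBaseChange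
    (htr : ∀ c, algebraMap F L (Algebra.trace F L c) = c + ι c) :
    (ψ.prod (conjForm ι V hι ψ)).comp ((diagonal ι V).liftBaseChange L) =
      (transferForm F L V ψ).baseChange L := by
  refine baseChange_ext fun v => ?_
  rw [QuadraticMap.comp_apply, QuadraticForm.baseChange_tmul, LinearMap.liftBaseChange_tmul,
    one_smul, prod_conjForm_diagonal hι ψ htr, mul_one, Algebra.algebraMap_eq_smul_one]

theorem exists_isometryEquiv_baseChange_transferForm {μ : L} (hμ : μ ≠ 0)
    (hμι : ι μ = -μ) (hspan : Submodule.span F {1, μ} = ⊤)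
    (htr : ∀ c, algebraMap F L (Algebra.trace F L c) = c + ι c) :
    ∃ e : ((transferForm F L V ψ).baseChange L).IsometryEquiv (ψ.prod (conjForm ι V hι ψ)),
      ∀ v, e (1 ⊗ₜ v) = diagonal ι V v := by
  let f := LinearEquiv.ofBijective ((diagonal ι V).liftBaseChange L)
    (diagonal_liftBaseChange_bijective (two_ne_zero_of_invertible F) hμ hμι hspan)
  refine ⟨⟨f, fun z => ?_⟩, fun v => ?_⟩
  · rw [← prod_conjForm_comp_diagonal_liftBaseChange hι ψ htr]
    rfl
  · change (diagonal ι V).liftBaseChange L (1 ⊗ₜ v) = _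
    rw [LinearMap.liftBaseChange_tmul, one_smul]

end Transfer

namespace QuadraticMap.IsometryEquiv
variable {F L M N : Type*} [Field F] [Field L] [Algebra F L] [AddCommGroup M] [Module F M]
  [AddCommGroup N] [Module L N] [Module F N] [IsScalarTower F L N] [Invertible (2 : F)]
  {Q : QuadraticForm F M} {Q' : QuadraticForm L N} (e : (Q.baseChange L).IsometryEquiv Q')

noncomputable def tensorCliffordEquiv : L ⊗[F] CliffordAlgebra Q ≃ₐ[L] CliffordAlgebra Q' :=
  (CliffordAlgebra.equivBaseChange L Q).symm.trans (CliffordAlgebra.equivOfIsometry e)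

noncomputable def cliffordEmbedding : CliffordAlgebra Q →ₐ[F] CliffordAlgebra Q' :=
  (e.tensorCliffordEquiv.toAlgHom.restrictScalars F).comp
    Algebra.TensorProduct.includeRight

theorem cliffordEmbedding_ι (m : M) :
    e.cliffordEmbedding (CliffordAlgebra.ι Q m) = CliffordAlgebra.ι Q' (e (1 ⊗ₜ m)) := by
  change CliffordAlgebra.equivOfIsometry e (CliffordAlgebra.ofBaseChange L Q (1 ⊗ₜ _)) = _
  rw [CliffordAlgebra.ofBaseChange_tmul_ι]
  exact CliffordAlgebra.map_apply_ι _ _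

theorem tensorCliffordEquiv_tmul (c : L) (x : CliffordAlgebra Q) :
    e.tensorCliffordEquiv (c ⊗ₜ x) = c • e.cliffordEmbedding x := by
  have hc : c ⊗ₜ[F] x = c • (1 ⊗ₜ x) := by rw [TensorProduct.smul_tmul', smul_eq_mul, mul_one]
  rw [hc, map_smul]
  rfl

theorem cliffordEmbedding_injective : Function.Injective e.cliffordEmbedding :=
  e.tensorCliffordEquiv.injective.comp
    (Algebra.TensorProduct.includeRight_injective (algebraMap F L).injective)

theorem exists_eq_cliffordEmbedding_add_smul {μ : L} (hspan : Submodule.span F {1, μ} = ⊤)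
    (y : CliffordAlgebra Q') :
    ∃ a b, y = e.cliffordEmbedding a + μ • e.cliffordEmbedding b := by
  obtain ⟨a, b, hab⟩ :=
    TensorProduct.exists_eq_one_tmul_add_tmul hspan (e.tensorCliffordEquiv.symm y)
  refine ⟨a, b, ?_⟩
  calc y = e.tensorCliffordEquiv (e.tensorCliffordEquiv.symm y) :=
        (AlgEquiv.apply_symm_apply _ _).symm
    _ = _ := by rw [hab, map_add, tensorCliffordEquiv_tmul, tensorCliffordEquiv_tmul, one_smul]

end QuadraticMap.IsometryEquiv

namespace CliffordAlgebra
variable {F L M N : Type*} [CommRing F] [CommRing L] [Algebra F L] [AddCommGroup M] [Module F M]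
  [AddCommGroup N] [Module L N] [Module F N] [IsScalarTower F L N]
  {Q : QuadraticForm F M} {Q' : QuadraticForm L N}
  {g : CliffordAlgebra Q →ₐ[F] CliffordAlgebra Q'} {φ : M → N}

theorem algHom_mem_evenOdd (hg : ∀ m, g (ι Q m) = ι Q' (φ m)) {i : ZMod 2} {x : CliffordAlgebra Q}
    (hx : x ∈ evenOdd Q i) : g x ∈ evenOdd Q' i := by
  have hpair : ∀ m₁ m₂ x j, g x ∈ evenOdd Q' j → g (ι Q m₁ * ι Q m₂ * x) ∈ evenOdd Q' j :=
    fun m₁ m₂ x j hx => by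
      rw [map_mul, map_mul, hg, hg]
      exact zero_add j ▸ SetLike.mul_mem_graded (ι_mul_ι_mem_evenOdd_zero Q' _ _) hx
  obtain rfl | rfl := (by decide : ∀ j : ZMod 2, j = 0 ∨ j = 1) i
  · induction x, hx using even_induction with
    | algebraMap r =>
      rw [AlgHom.commutes, IsScalarTower.algebraMap_apply F L]
      exact SetLike.algebraMap_mem_graded _ _
    | add x y _ _ hx hy => exact map_add g x y ▸ Submodule.add_mem _ hx hy
    | ι_mul_ι_mul m₁ m₂ x _ hx => exact hpair m₁ m₂ x 0 hx
  · induction x, hx using odd_induction with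
    | ι m => exact hg m ▸ ι_mem_evenOdd_one Q' _
    | add x y _ _ hx hy => exact map_add g x y ▸ Submodule.add_mem _ hx hy
    | ι_mul_ι_mul m₁ m₂ x _ hx => exact hpair m₁ m₂ x 1 hx

theorem algHom_reverse (hg : ∀ m, g (ι Q m) = ι Q' (φ m)) (x : CliffordAlgebra Q) :
    g (reverse x) = reverse (g x) := by
  induction x using CliffordAlgebra.induction with
  | algebraMap r =>
    rw [reverse.commutes, AlgHom.commutes, IsScalarTower.algebraMap_apply F L, reverse.commutes]
  | ι m => rw [reverse_ι, hg, reverse_ι]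
  | mul a b ha hb => rw [reverse.map_mul, map_mul, ha, hb, map_mul, reverse.map_mul]
  | add a b ha hb => rw [map_add, map_add, ha, hb, map_add, map_add]

theorem apply_algHom_eq_self {A G : Type*} [Ring A] [Algebra F A] [FunLike G A A]
    [RingHomClass G A A] (S : G) (hS : ∀ r : F, S (algebraMap F A r) = algebraMap F A r)
    (f : CliffordAlgebra Q →ₐ[F] A) (hf : ∀ m, S (f (ι Q m)) = f (ι Q m))
    (x : CliffordAlgebra Q) : S (f x) = f x := by
  induction x using CliffordAlgebra.induction with
  | algebraMap r => rw [AlgHom.commutes, hS]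
  | ι m => exact hf m
  | mul a b ha hb => rw [map_mul, map_mul, ha, hb]
  | add a b ha hb => rw [map_add, map_add, ha, hb]

end CliffordAlgebra

theorem mem_range_of_apply_eq_self {L A B G : Type*} [Field L] [AddCommGroup A] [Module L A]
    [FunLike G A A] [AddMonoidHomClass G A A] (h2 : (2 : L) ≠ 0) {μ : L} (hμ : μ ≠ 0)
    (S : G) (hS : ∀ x, S (μ • x) = -μ • S x) {Φ : B → A} (hSΦ : ∀ b, S (Φ b) = Φ b)
    (hdec : ∀ y, ∃ a b, y = Φ a + μ • Φ b) {y : A} (hy : S y = y) : y ∈ Set.range Φ := by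
  obtain ⟨a, b, rfl⟩ := hdec y
  rw [map_add, hS, hSΦ, hSΦ, add_right_inj, neg_smul, neg_eq_iff_add_eq_zero, ← two_smul L,
    smul_smul, smul_eq_zero, mul_eq_zero] at hy
  obtain (h | h) | h := hy
  · exact absurd h h2
  · exact absurd h hμ
  · exact ⟨a, by rw [h, smul_zero, add_zero]⟩

theorem clifford_of_transfer_is_fixed_points_general
    (F L : Type) [Field F] [Field L] [Algebra F L]
    (hF : (2:F) ≠ 0) (hquad : Module.finrank F L = 2)
    (ιL : L ≃ₐ[F] L) (hnontriv : ιL ≠ AlgEquiv.refl) (hι : Function.Involutive ιL)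
    (V : Type) [AddCommGroup V] [Module L V] [Module F V] [IsScalarTower F L V]
    (ψ : QuadraticForm L V) :
    -- the fixed points of the switch on `V ⊕ ^ιV` form the diagonal
    (∀ p : V × Conj ιL V, (ofConj ιL V p.2, toConj ιL V p.1) = p ↔
      ∃ v : V, p = (v, toConj ιL V v)) ∧
    -- the restriction of `ψ ⊥ ^ιψ` to the diagonal is the transfer `v ↦ Tr_{L/F}(ψ(v))`
    (∀ v : V, (ψ.prod (conjForm ιL V hι ψ)) (v, toConj ιL V v) =
      algebraMap F L (transferForm F L V ψ v)) ∧
    -- and for the (unique) semilinear automorphism `S` extending the switch: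
    ∀ S : CliffordAlgebra (ψ.prod (conjForm ιL V hι ψ)) ≃+*
        CliffordAlgebra (ψ.prod (conjForm ιL V hι ψ)),
      (∀ (c : L) (x : CliffordAlgebra (ψ.prod (conjForm ιL V hι ψ))),
        S (c • x) = ιL c • S x) →
      (∀ p : V × Conj ιL V,
        S (CliffordAlgebra.ι (ψ.prod (conjForm ιL V hι ψ)) p) =
          CliffordAlgebra.ι (ψ.prod (conjForm ιL V hι ψ)) (ofConj ιL V p.2, toConj ιL V p.1)) →
      ∃ Φ : CliffordAlgebra (transferForm F L V ψ) →+*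
          CliffordAlgebra (ψ.prod (conjForm ιL V hι ψ)),
        -- F-algebra homomorphism (F-linear ring homomorphism)
        (∀ (a : F) (x : CliffordAlgebra (transferForm F L V ψ)),
          Φ (a • x) = algebraMap F L a • Φ x) ∧
        -- injective, i.e. an isomorphism onto its image, ...
        Function.Injective Φ ∧
        -- ... which is exactly the set of `S`-fixed points
        (∀ y : CliffordAlgebra (ψ.prod (conjForm ιL V hι ψ)),
          S y = y ↔ y ∈ Set.range Φ) ∧
        -- induced by the natural embedding of the diagonal quadratic space
        (∀ v : V, Φ (CliffordAlgebra.ι (transferForm F L V ψ) v) =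
          CliffordAlgebra.ι (ψ.prod (conjForm ιL V hι ψ)) (v, toConj ιL V v)) ∧
        -- preserves the even/odd grading
        (∀ (i : ZMod 2) (x : CliffordAlgebra (transferForm F L V ψ)),
          x ∈ CliffordAlgebra.evenOdd (transferForm F L V ψ) i →
            Φ x ∈ CliffordAlgebra.evenOdd (ψ.prod (conjForm ιL V hι ψ)) i) ∧
        -- intertwines the canonical involutions
        (∀ x : CliffordAlgebra (transferForm F L V ψ),
          Φ (CliffordAlgebra.reverse (Q := transferForm F L V ψ) x) =
            CliffordAlgebra.reverse (Q := ψ.prod (conjForm ιL V hι ψ)) (Φ x)) := by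
  let _ : Invertible (2 : F) := invertibleOfNonzero hF
  have htr := algebraMap_trace_eq_add_of_finrank_eq_two hquad hnontriv
  obtain ⟨μ, hμ, hμι⟩ := AlgEquiv.exists_apply_eq_neg hnontriv hι
  have hspan := span_one_pair_eq_top htr hF hμ hμι
  obtain ⟨e, he⟩ := exists_isometryEquiv_baseChange_transferForm hι ψ hμ hμι hspan htr
  have hι_diag : ∀ v, e.cliffordEmbedding (CliffordAlgebra.ι _ v) =
      CliffordAlgebra.ι (ψ.prod (conjForm ιL V hι ψ)) (v, toConj ιL V v) := fun v =>
    (e.cliffordEmbedding_ι v).trans (congrArg _ (he v))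
  refine ⟨switch_eq_self_iff ιL V, prod_conjForm_diagonal hι ψ htr, fun S hS hSι => ?_⟩
  have hS_algebraMap : ∀ r : F, S (algebraMap F _ r) = algebraMap F _ r := fun r => by
    rw [Algebra.algebraMap_eq_smul_one, ← algebraMap_smul L, hS, map_one, AlgEquiv.commutes,
      algebraMap_smul]
  have hfix : ∀ x, S (e.cliffordEmbedding x) = e.cliffordEmbedding x :=
    CliffordAlgebra.apply_algHom_eq_self S hS_algebraMap _ fun v => by rw [hι_diag, hSι]; rfl
  refine ⟨e.cliffordEmbedding.toRingHom, fun a x => by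
      rw [algebraMap_smul]; exact map_smul e.cliffordEmbedding a x,
    e.cliffordEmbedding_injective, fun y => ⟨fun hy => ?_, ?_⟩, hι_diag,
    fun _ _ => CliffordAlgebra.algHom_mem_evenOdd hι_diag, CliffordAlgebra.algHom_reverse hι_diag⟩
  · exact mem_range_of_apply_eq_self (two_ne_zero_of_invertible F) hμ S
      (fun x => by rw [hS, hμι]) hfix (e.exists_eq_cliffordEmbedding_add_smul hspan) hy
  · rintro ⟨x, rfl⟩
    exact hfix x

/-- The fixed points of the switch on `V ⊕ ^ιV` form the diagonal copy of `V`, the restriction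
of `ψ ⊥ ^ιψ` to it is the transfer `tr⋆(ψ)`, and the natural embedding induces an isomorphism
of `C(tr⋆(ψ))` onto the `F`-subalgebra of fixed points of the switch automorphism of
`C(ψ ⊥ ^ιψ)`, compatible with the gradings and the canonical involutions. -/
theorem clifford_of_transfer_is_fixed_points
    (F L : Type) [Field F] [Field L] [Algebra F L]
    (hF : (2:F) ≠ 0) (hquad : Module.finrank F L = 2)
    (ιL : L ≃ₐ[F] L) (hnontriv : ιL ≠ AlgEquiv.refl) (hι : Function.Involutive ιL)
    (V : Type) [AddCommGroup V] [Module L V] [Module F V] [IsScalarTower F L V]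
    [FiniteDimensional L V]
    (ψ : QuadraticForm L V) :
    -- the fixed points of the switch on `V ⊕ ^ιV` form the diagonal
    (∀ p : V × Conj ιL V, (ofConj ιL V p.2, toConj ιL V p.1) = p ↔
      ∃ v : V, p = (v, toConj ιL V v)) ∧
    -- the restriction of `ψ ⊥ ^ιψ` to the diagonal is the transfer `v ↦ Tr_{L/F}(ψ(v))`
    (∀ v : V, (ψ.prod (conjForm ιL V hι ψ)) (v, toConj ιL V v) =
      algebraMap F L (transferForm F L V ψ v)) ∧
    -- and for the (unique) semilinear automorphism `S` extending the switch:
    ∀ S : CliffordAlgebra (ψ.prod (conjForm ιL V hι ψ)) ≃+*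
        CliffordAlgebra (ψ.prod (conjForm ιL V hι ψ)),
      (∀ (c : L) (x : CliffordAlgebra (ψ.prod (conjForm ιL V hι ψ))),
        S (c • x) = ιL c • S x) →
      (∀ p : V × Conj ιL V,
        S (CliffordAlgebra.ι (ψ.prod (conjForm ιL V hι ψ)) p) =
          CliffordAlgebra.ι (ψ.prod (conjForm ιL V hι ψ)) (ofConj ιL V p.2, toConj ιL V p.1)) →
      ∃ Φ : CliffordAlgebra (transferForm F L V ψ) →+*
          CliffordAlgebra (ψ.prod (conjForm ιL V hι ψ)),
        -- F-algebra homomorphism (F-linear ring homomorphism)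
        (∀ (a : F) (x : CliffordAlgebra (transferForm F L V ψ)),
          Φ (a • x) = algebraMap F L a • Φ x) ∧
        -- injective, i.e. an isomorphism onto its image, ...
        Function.Injective Φ ∧
        -- ... which is exactly the set of `S`-fixed points
        (∀ y : CliffordAlgebra (ψ.prod (conjForm ιL V hι ψ)),
          S y = y ↔ y ∈ Set.range Φ) ∧
        -- induced by the natural embedding of the diagonal quadratic space
        (∀ v : V, Φ (CliffordAlgebra.ι (transferForm F L V ψ) v) =
          CliffordAlgebra.ι (ψ.prod (conjForm ιL V hι ψ)) (v, toConj ιL V v)) ∧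
        -- preserves the even/odd grading
        (∀ (i : ZMod 2) (x : CliffordAlgebra (transferForm F L V ψ)),
          x ∈ CliffordAlgebra.evenOdd (transferForm F L V ψ) i →
            Φ x ∈ CliffordAlgebra.evenOdd (ψ.prod (conjForm ιL V hι ψ)) i) ∧
        -- intertwines the canonical involutions
        (∀ x : CliffordAlgebra (transferForm F L V ψ),
          Φ (CliffordAlgebra.reverse (Q := transferForm F L V ψ) x) =
            CliffordAlgebra.reverse (Q := ψ.prod (conjForm ιL V hι ψ)) (Φ x)) :=
  clifford_of_transfer_is_fixed_points_general F L hF hquad ιL hnontriv hι V ψ
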